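/- arXiv:2303.10155 — 4 statements merged into one kernel-verified Lean document; each statement's English description precedes it below -/
import Mathlib

section
/- If x_i - x_k = c(x_i - x_j) for some scalar c in (0,1), and b_{ik} = c*b_{ij}, then the Laguerre cell C_k(z) is contained in the hyperplane {y : <x_i - x_j, y> = b_{ij}}, hence has Lebesgue measure zero. -/
open RealInnerProductSpace MeasureTheory

/-- offsets b_{ij}(z) -/
noncomputable def bOff {d N : ℕ} (x : Fin N → EuclideanSpace ℝ (Fin d))
    (z : Fin N → ℝ) (i j : Fin N) : ℝ :=
  (‖x i‖ ^ 2 - ‖x j‖ ^ 2) / 2 - z i + z j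

/-- Laguerre cell C_i(z) -/
noncomputable def Lcell {d N : ℕ} (x : Fin N → EuclideanSpace ℝ (Fin d))
    (z : Fin N → ℝ) (i : Fin N) : Set (EuclideanSpace ℝ (Fin d)) :=
  {y | ∀ j, j ≠ i → bOff x z i j ≤ ⟪x i - x j, y⟫}

/-- hyperplane null set -/
lemma hyperplane_null {d : ℕ} (v : EuclideanSpace ℝ (Fin d)) (hv : v ≠ 0) (b : ℝ) :
    volume {y : EuclideanSpace ℝ (Fin d) | ⟪v, y⟫ = b} = 0 := by
  set f : EuclideanSpace ℝ (Fin d) →ₗ[ℝ] ℝ := (innerSL ℝ v : _ →L[ℝ] ℝ).toLinearMap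
  set s : AffineSubspace ℝ (EuclideanSpace ℝ (Fin d)) :=
    AffineSubspace.comap f.toAffineMap (AffineSubspace.mk' b (⊥ : Submodule ℝ ℝ))
  have hmem : ∀ y, y ∈ s ↔ ⟪v, y⟫ = b := by
    intro y
    simp only [s, AffineSubspace.mem_comap, LinearMap.coe_toAffineMap]
    constructor
    · intro h
      rcases (AffineSubspace.mem_mk').1 h with h'
      simpa [f, sub_eq_zero] using h'
    · intro h
      refine (AffineSubspace.mem_mk').2 ?_
      simp [f, h]
  have hne : s ≠ ⊤ := by
    intro htop
    have hy : ((b + 1) / ‖v‖ ^ 2) • v ∈ s := htop ▸ AffineSubspace.mem_top ℝ _ _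
    rw [hmem] at hy
    have hv2 : ‖v‖ ^ 2 ≠ 0 := pow_ne_zero _ (norm_ne_zero_iff.2 hv)
    rw [inner_smul_right, real_inner_self_eq_norm_sq, div_mul_cancel₀ _ hv2] at hy
    linarith
  have := Measure.addHaar_affineSubspace (volume : Measure (EuclideanSpace ℝ (Fin d))) s hne
  refine measure_mono_null (fun y hy => ?_) this
  exact (hmem y).2 hy

/-- if x_i - x_k = c (x_i - x_j) with c ∈ (0,1) and b_{ik} = c b_{ij}, then
C_k(z) lies in the hyperplane {y : ⟪x_i - x_j, y⟫ = b_{ij}} and has Lebesgue measure zero. -/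
theorem laguerre_cell_degenerate_of_mem_Ioo (d N : ℕ) (hN : 3 ≤ N)
    (x : Fin N → EuclideanSpace ℝ (Fin d)) (hx : Function.Injective x)
    (z : Fin N → ℝ) (i j k : Fin N) (hij : i ≠ j) (hik : i ≠ k) (hjk : j ≠ k)
    (c : ℝ) (hc0 : 0 < c) (hc1 : c < 1) (hxk : x i - x k = c • (x i - x j))
    (hbk : bOff x z i k = c * bOff x z i j) :
    Lcell x z k ⊆ {y | ⟪x i - x j, y⟫ = bOff x z i j} ∧ volume (Lcell x z k) = 0 := by
  have hsub : Lcell x z k ⊆ {y | ⟪x i - x j, y⟫ = bOff x z i j} := by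
    intro y hy
    have h1 := hy i hik
    have h2 := hy j hjk
    have hki : x k - x i = -(c • (x i - x j)) := by rw [← hxk]; abel
    have hkj : x k - x j = (1 - c) • (x i - x j) := by
      have : x k - x j = (x i - x j) - (x i - x k) := by abel
      rw [this, hxk, sub_smul, one_smul]
    have hbki : bOff x z k i = -(c * bOff x z i j) := by
      rw [← hbk]; simp [bOff]; ring
    have hbkj : bOff x z k j = (1 - c) * bOff x z i j := by
      simp only [bOff] at hbk ⊢; nlinarith [hbk]
    rw [hki, inner_neg_left, real_inner_smul_left, hbki] at h1
    rw [hkj, real_inner_smul_left, hbkj] at h2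
    have hle : ⟪x i - x j, y⟫ ≤ bOff x z i j := by
      have := neg_le_neg_iff.1 (by linarith : -(c * ⟪x i - x j, y⟫) ≥ -(c * bOff x z i j))
      exact le_of_mul_le_mul_left (by linarith) hc0
    have hge : bOff x z i j ≤ ⟪x i - x j, y⟫ :=
      le_of_mul_le_mul_left (by linarith) (by linarith : (0:ℝ) < 1 - c)
    exact le_antisymm hle hge
  refine ⟨hsub, measure_mono_null hsub ?_⟩
  exact hyperplane_null _ (sub_ne_zero.2 fun h => hij (hx h)) _
end

section
/- If x_i - x_k = c(x_i - x_j) for some scalar c > 1, and b_{ik} = c*b_{ij}, then the Laguerre cell C_j(z) is contained in the hyperplane {y : <x_i - x_j, y> = b_{ij}}, hence has Lebesgue measure zero. -/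
open RealInnerProductSpace MeasureTheory

/-!
On `C_j` the constraint against `x_i` reads `⟪x_i - x_j, y⟫ ≤ b_{ij}`, while the constraint
against `x_k` is, by collinearity, `(c - 1)` times the reverse inequality `b_{ij} ≤ ⟪x_i - x_j, y⟫`.
Since `c > 1`, the cell lies in that hyperplane, which is Lebesgue-null because `x_i ≠ x_j`.
-/

section Hyperplane

variable {E : Type*} [NormedAddCommGroup E] [InnerProductSpace ℝ E] [FiniteDimensional ℝ E]
  [MeasurableSpace E] [BorelSpace E] (μ : Measure E) [μ.IsAddHaarMeasure]

theorem addHaar_preimage_singleton_of_ne_zero {f : E →ₗ[ℝ] ℝ} (hf : f ≠ 0) (b : ℝ) :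
    μ (f ⁻¹' {b}) = 0 := by
  obtain ⟨y₀, rfl⟩ := LinearMap.surjective_iff_ne_zero.2 hf b
  have hker : f ⁻¹' {f y₀} = (· + -y₀) ⁻¹' LinearMap.ker f := by
    ext y
    simp [sub_eq_zero, ← sub_eq_add_neg]
  rw [hker, measure_preimage_add_right]
  exact Measure.addHaar_submodule μ _ (by rwa [Ne, LinearMap.ker_eq_top])

theorem addHaar_setOf_inner_eq {v : E} (hv : v ≠ 0) (b : ℝ) : μ {y | ⟪v, y⟫ = b} = 0 := by
  have hf : innerₛₗ ℝ v ≠ 0 := fun h ↦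
    hv (inner_self_eq_zero.1 (LinearMap.congr_fun h v))
  exact addHaar_preimage_singleton_of_ne_zero μ hf b

end Hyperplane

section Offsets

variable {d N : ℕ} (x : Fin N → EuclideanSpace ℝ (Fin d)) (z : Fin N → ℝ)

theorem bOff_swap (i j : Fin N) : bOff x z j i = -bOff x z i j := by
  simp only [bOff]
  ring

theorem bOff_add (i j k : Fin N) : bOff x z i j + bOff x z j k = bOff x z i k := by
  simp only [bOff]
  ring

end Offsets

theorem Lcell_subset_setOf_inner_eq {d N : ℕ} {x : Fin N → EuclideanSpace ℝ (Fin d)}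
    {z : Fin N → ℝ} {i j k : Fin N} (hij : i ≠ j) (hjk : j ≠ k) {c : ℝ} (hc : 1 < c)
    (hxk : x i - x k = c • (x i - x j)) (hbk : bOff x z i k = c * bOff x z i j) :
    Lcell x z j ⊆ {y | ⟪x i - x j, y⟫ = bOff x z i j} := by
  intro y hy
  have hxjk : x j - x k = (c - 1) • (x i - x j) := by
    rw [sub_smul, one_smul, ← hxk]
    abel
  have hbjk : bOff x z j k = (c - 1) * bOff x z i j := by
    rw [sub_mul, one_mul, ← hbk, ← bOff_add x z j i k, bOff_swap x z i j]
    ring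
  have upper : ⟪x i - x j, y⟫ ≤ bOff x z i j := by
    have h := hy i hij
    rwa [bOff_swap, ← neg_sub, inner_neg_left, neg_le_neg_iff] at h
  have lower : bOff x z i j ≤ ⟪x i - x j, y⟫ := by
    have h := hy k hjk.symm
    rw [hxjk, real_inner_smul_left, hbjk] at h
    exact le_of_mul_le_mul_left h (sub_pos.2 hc)
  exact le_antisymm upper lower

theorem laguerre_cell_degenerate_of_gt_one_general (d N : ℕ)
    (x : Fin N → EuclideanSpace ℝ (Fin d)) (hx : Function.Injective x)
    (z : Fin N → ℝ) (i j k : Fin N) (hij : i ≠ j) (hjk : j ≠ k)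
    (c : ℝ) (hc : 1 < c) (hxk : x i - x k = c • (x i - x j))
    (hbk : bOff x z i k = c * bOff x z i j) :
    Lcell x z j ⊆ {y | ⟪x i - x j, y⟫ = bOff x z i j} ∧ volume (Lcell x z j) = 0 := by
  have hsub := Lcell_subset_setOf_inner_eq hij hjk hc hxk hbk
  have hv : x i - x j ≠ 0 := sub_ne_zero.2 (hx.ne hij)
  exact ⟨hsub, measure_mono_null hsub (addHaar_setOf_inner_eq volume hv _)⟩

/-- if x_i - x_k = c (x_i - x_j) with c > 1 and b_{ik} = c b_{ij}, then
C_j(z) lies in the hyperplane {y : ⟪x_i - x_j, y⟫ = b_{ij}} and has Lebesgue measure zero. -/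
theorem laguerre_cell_degenerate_of_gt_one (d N : ℕ) (hN : 3 ≤ N)
    (x : Fin N → EuclideanSpace ℝ (Fin d)) (hx : Function.Injective x)
    (z : Fin N → ℝ) (i j k : Fin N) (hij : i ≠ j) (hik : i ≠ k) (hjk : j ≠ k)
    (c : ℝ) (hc : 1 < c) (hxk : x i - x k = c • (x i - x j))
    (hbk : bOff x z i k = c * bOff x z i j) :
    Lcell x z j ⊆ {y | ⟪x i - x j, y⟫ = bOff x z i j} ∧ volume (Lcell x z j) = 0 :=
  laguerre_cell_degenerate_of_gt_one_general d N x hx z i j k hij hjk c hc hxk hbk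
end

section
/- Let y be a point in D_{ij}(h_1,h_2,t) \ C_j(z* + t h_2), where D_{ij}(h_1,h_2,t) is the intersection of C_i(z* + t h_1) with the slab {y : t(h_{1,j}-h_{1,i}) <= <x_i - x_j, y> - b_{ij} <= t(h_{2,j}-h_{2,i})}. Then there exists an index k != i, j such that t(h_{1,k} - h_{1,i}) <= <x_i - x_k, y> - b_{ik} < t(h_{2,k} - h_{2,i}). -/
open RealInnerProductSpace MeasureTheory

/-- a point of D_{ij}(h₁,h₂,t) not belonging to C_j(z* + t h₂) lies in one of
the thin slabs indexed by k ≠ i, j. -/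
theorem exists_index_slab (d N : ℕ) (x : Fin N → EuclideanSpace ℝ (Fin d))
    (hx : Function.Injective x) (zs h₁ h₂ : Fin N → ℝ) (t : ℝ) (ht : 0 < t)
    (i j : Fin N) (hij : i ≠ j) (y : EuclideanSpace ℝ (Fin d))
    (hyC : y ∈ Lcell x (zs + t • h₁) i)
    (hlow : t * (h₁ j - h₁ i) ≤ ⟪x i - x j, y⟫ - bOff x zs i j)
    (hhigh : ⟪x i - x j, y⟫ - bOff x zs i j ≤ t * (h₂ j - h₂ i))
    (hnot : y ∉ Lcell x (zs + t • h₂) j) :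
    ∃ k, k ≠ i ∧ k ≠ j ∧
      t * (h₁ k - h₁ i) ≤ ⟪x i - x k, y⟫ - bOff x zs i k ∧
      ⟪x i - x k, y⟫ - bOff x zs i k < t * (h₂ k - h₂ i) := by
  rw [Lcell, Set.mem_setOf_eq] at hnot
  push_neg at hnot
  obtain ⟨k, hkj, hk⟩ := hnot
  simp only [bOff, inner_sub_left, Pi.add_apply, Pi.smul_apply, smul_eq_mul] at hk hhigh hlow ⊢
  have hki : k ≠ i := by
    intro hk'
    rw [hk'] at hk
    linarith [mul_sub t (h₂ j) (h₂ i)]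
  have h1 := hyC k hki
  simp only [bOff, inner_sub_left, Pi.add_apply, Pi.smul_apply, smul_eq_mul] at h1
  exact ⟨k, hki, hkj, by linarith [mul_sub t (h₁ k) (h₁ i)],
    by linarith [mul_sub t (h₂ k) (h₂ i), mul_sub t (h₂ j) (h₂ i)]⟩
end

section
/- Suppose the reference density rho on R^d is bounded by M and supported in a compact set Y. Fix distinct points x_i, x_j in R^d and real b. Then for any real numbers alpha <= beta, the R-measure of the slab {y : alpha <= <x_i - x_j, y> - b <= beta} is at most (beta - alpha)/||x_i - x_j|| * M * H^{d-1}(H ∩ Y'), where H = {y : <x_i - x_j, y> = b}, Y' is a suitable bounded neighborhood of Y, and H^{d-1} denotes (d-1)-dimensional Hausdorff measure; in particular the slab measure is O(beta - alpha) as beta - alpha -> 0. -/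
open RealInnerProductSpace MeasureTheory

/-! The density is at most `M` and vanishes off `Y`, so the slab has `R`-measure at most `M` times
the volume of its part in `Y`. In coordinates given by an orthonormal basis whose first vector is
normal to `H`, that part lies in the product of an interval of length `(β - α) / ‖xi - xj‖` with the
set of its remaining coordinates. Those coordinates are a 1-Lipschitz function of the orthogonal
projection onto `H`, which maps the part into `H ∩ Y'`; and on `Fin k → ℝ` volume is `μH[k]`. -/

theorem withDensity_ofReal_apply_le_mul_inter {X : Type*} [MeasurableSpace X] (μ : Measure X)
    {ρ : X → ℝ} {M : ℝ} {Y : Set X} (hY : MeasurableSet Y) (hρM : ∀ y, ρ y ≤ M)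
    (hsupp : ∀ y ∉ Y, ρ y = 0) (S : Set X) :
    μ.withDensity (fun y => ENNReal.ofReal (ρ y)) S ≤ ENNReal.ofReal M * μ (S ∩ Y) := by
  have hdens : (fun y => ENNReal.ofReal (ρ y)) ≤ Y.indicator fun _ => ENNReal.ofReal M := by
    intro y
    by_cases hy : y ∈ Y
    · simpa [hy] using ENNReal.ofReal_le_ofReal (hρM y)
    · simp [hy, hsupp y hy]
  calc μ.withDensity (fun y => ENNReal.ofReal (ρ y)) S
      ≤ μ.withDensity (Y.indicator fun _ => ENNReal.ofReal M) S :=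
        Measure.le_iff'.1 (withDensity_mono (Filter.Eventually.of_forall hdens)) S
    _ = ENNReal.ofReal M * μ (S ∩ Y) := by
        rw [withDensity_indicator hY, withDensity_const, Measure.smul_apply,
          Measure.restrict_apply' hY, smul_eq_mul]

section Hyperplane

variable {E : Type*} [NormedAddCommGroup E] [InnerProductSpace ℝ E]

noncomputable def hyperplaneProj (v : E) (b : ℝ) (y : E) : E :=
  y - ((⟪v, y⟫ - b) / ‖v‖ ^ 2) • v

variable {v : E} (b : ℝ)

theorem inner_hyperplaneProj (hv : v ≠ 0) (y : E) : ⟪v, hyperplaneProj v b y⟫ = b := by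
  have : ‖v‖ ≠ 0 := norm_ne_zero_iff.2 hv
  rw [hyperplaneProj, inner_sub_right, real_inner_smul_right, real_inner_self_eq_norm_sq]
  field_simp
  ring

theorem dist_hyperplaneProj_self (hv : v ≠ 0) (y : E) :
    dist (hyperplaneProj v b y) y = |⟪v, y⟫ - b| / ‖v‖ := by
  have : 0 < ‖v‖ := norm_pos_iff.2 hv
  rw [hyperplaneProj, dist_eq_norm, sub_sub_cancel_left, norm_neg, norm_smul, Real.norm_eq_abs,
    abs_div, abs_of_pos (by positivity : (0 : ℝ) < ‖v‖ ^ 2)]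
  field_simp

theorem image_hyperplaneProj_slab_inter_subset (hv : v ≠ 0) (α β : ℝ) (Y : Set E) :
    hyperplaneProj v b '' ({y | α ≤ ⟪v, y⟫ - b ∧ ⟪v, y⟫ - b ≤ β} ∩ Y) ⊆
      {y | ⟪v, y⟫ = b} ∩ {y | Metric.infDist y Y ≤ (|α| ⊔ |β|) / ‖v‖} := by
  rintro _ ⟨y, ⟨hyS, hyY⟩, rfl⟩
  refine ⟨inner_hyperplaneProj b hv y, (Metric.infDist_le_dist_of_mem hyY).trans ?_⟩
  rw [dist_hyperplaneProj_self b hv]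
  gcongr
  exact abs_le_max_abs_abs hyS.1 hyS.2

variable [FiniteDimensional ℝ E] [MeasurableSpace E] [BorelSpace E]

theorem exists_measurePreserving_inner_prod_pi {k : ℕ} (hk : Module.finrank ℝ E = k + 1)
    (hv : v ≠ 0) :
    ∃ Φ : E ≃ᵐ ℝ × (Fin k → ℝ), MeasurePreserving Φ ∧ (∀ y, (Φ y).1 = ⟪v, y⟫ / ‖v‖) ∧
      LipschitzWith 1 (fun y => (Φ y).2) ∧ ∀ y (t : ℝ), (Φ (y - t • v)).2 = (Φ y).2 := by
  set n : E := ‖v‖⁻¹ • v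
  have hn : ‖n‖ = 1 := norm_smul_inv_norm hv
  have horth : Orthonormal ℝ (({0} : Set (Fin (k + 1))).domRestrict fun _ => n) :=
    ⟨fun _ => hn, fun {i j} h => absurd (Subsingleton.elim i j) h⟩
  obtain ⟨B, hB⟩ := horth.exists_orthonormalBasis_extension_of_card_eq (by simpa using hk)
  have hB0 : B 0 = n := hB 0 rfl
  let Φ : E ≃ᵐ ℝ × (Fin k → ℝ) :=
    (B.measurableEquiv.trans (MeasurableEquiv.toLp 2 (Fin (k + 1) → ℝ)).symm).trans
      (MeasurableEquiv.piFinSuccAbove (fun _ => ℝ) 0)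
  have hΦ2 : ∀ y i, (Φ y).2 i = ⟪B i.succ, y⟫ := fun y i => by
    show B.repr y ((0 : Fin (k + 1)).succAbove i) = _
    rw [Fin.zero_succAbove, B.repr_apply_apply]
  refine ⟨Φ, ?_, fun y => ?_, ?_, fun y t => funext fun i => ?_⟩
  · exact ((volume_preserving_piFinSuccAbove (fun _ => ℝ) 0).comp
      (EuclideanSpace.volume_preserving_symm_measurableEquiv_toLp (Fin (k + 1)))).comp
      B.measurePreserving_measurableEquiv
  · show B.repr y 0 = _
    rw [B.repr_apply_apply, hB0, real_inner_smul_left, div_eq_inv_mul]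
  · refine LipschitzWith.of_dist_le_mul fun y y' => ?_
    rw [NNReal.coe_one, one_mul, dist_pi_le_iff dist_nonneg]
    intro i
    rw [hΦ2, hΦ2, Real.dist_eq, ← inner_sub_right, dist_eq_norm]
    simpa [B.orthonormal.1 i.succ] using abs_real_inner_le_norm (B i.succ) (y - y')
  · have hv_orth : ⟪B i.succ, v⟫ = 0 := by
      have hvn : v = ‖v‖ • n := (smul_inv_smul₀ (norm_ne_zero_iff.2 hv) v).symm
      rw [hvn, real_inner_smul_right, ← hB0, B.orthonormal.2 (Fin.succ_ne_zero i), mul_zero]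
    rw [hΦ2, hΦ2, inner_sub_right, real_inner_smul_right, hv_orth, mul_zero, sub_zero]

theorem volume_le_mul_hausdorffMeasure_image_hyperplaneProj {k : ℕ}
    (hk : Module.finrank ℝ E = k + 1) (hv : v ≠ 0) {α β : ℝ} {A : Set E}
    (hA : A ⊆ {y | α ≤ ⟪v, y⟫ - b ∧ ⟪v, y⟫ - b ≤ β}) :
    volume A ≤ ENNReal.ofReal ((β - α) / ‖v‖) * μH[k] (hyperplaneProj v b '' A) := by
  obtain ⟨Φ, hΦ, hΦ1, hLip, hΦ2⟩ := exists_measurePreserving_inner_prod_pi hk hv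
  set p : E → Fin k → ℝ := fun y => (Φ y).2
  have hsub : A ⊆ Φ ⁻¹' (Set.Icc ((b + α) / ‖v‖) ((b + β) / ‖v‖) ×ˢ (p '' A)) := by
    intro y hy
    refine ⟨?_, y, hy, rfl⟩
    rw [Set.mem_Icc, hΦ1]
    constructor <;> gcongr <;> linarith [(hA hy).1, (hA hy).2]
  have hp : p '' A = p '' (hyperplaneProj v b '' A) := by
    rw [Set.image_image]
    exact Set.image_congr fun y _ => (hΦ2 y _).symm
  have hvol : (volume : Measure (Fin k → ℝ)) = μH[k] := by
    simpa using (hausdorffMeasure_pi_real (ι := Fin k)).symm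
  calc volume A
      ≤ volume (Set.Icc ((b + α) / ‖v‖) ((b + β) / ‖v‖) ×ˢ (p '' A)) :=
        (measure_mono hsub).trans_eq (hΦ.measure_preimage_equiv _)
    _ = ENNReal.ofReal ((β - α) / ‖v‖) * μH[k] (p '' A) := by
        rw [Measure.volume_eq_prod, Measure.prod_prod, Real.volume_Icc, hvol, ← sub_div,
          add_sub_add_left_eq_sub]
    _ ≤ ENNReal.ofReal ((β - α) / ‖v‖) * μH[k] (hyperplaneProj v b '' A) := by
        rw [hp]
        gcongr
        simpa using hLip.hausdorffMeasure_image_le (Nat.cast_nonneg k) _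

end Hyperplane

theorem slab_measure_le_general (d : ℕ) (ρ : EuclideanSpace ℝ (Fin d) → ℝ) (M : ℝ)
    (hρM : ∀ y, ρ y ≤ M)
    (Y : Set (EuclideanSpace ℝ (Fin d))) (hY : IsCompact Y)
    (hsupp : ∀ y ∉ Y, ρ y = 0)
    (R : Measure (EuclideanSpace ℝ (Fin d)))
    (hR : R = volume.withDensity (fun y => ENNReal.ofReal (ρ y)))
    (xi xj : EuclideanSpace ℝ (Fin d)) (hij : xi ≠ xj) (b α β : ℝ) (hαβ : α ≤ β) :
    R {y | α ≤ ⟪xi - xj, y⟫ - b ∧ ⟪xi - xj, y⟫ - b ≤ β}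
      ≤ ENNReal.ofReal ((β - α) / ‖xi - xj‖ * M) *
        μH[(d : ℝ) - 1] ({y | ⟪xi - xj, y⟫ = b} ∩
          {y | Metric.infDist y Y ≤ (|α| ⊔ |β|) / ‖xi - xj‖}) := by
  obtain ⟨k, rfl⟩ : ∃ k, d = k + 1 :=
    Nat.exists_eq_succ_of_ne_zero fun hd => hij (by subst hd; exact Subsingleton.elim _ _)
  have hv : xi - xj ≠ 0 := sub_ne_zero.2 hij
  rw [hR, show ((k + 1 : ℕ) : ℝ) - 1 = k by push_cast; ring,
    ENNReal.ofReal_mul (div_nonneg (sub_nonneg.2 hαβ) (norm_nonneg _)),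
    mul_comm (ENNReal.ofReal _), mul_assoc]
  calc _ ≤ ENNReal.ofReal M * volume ({y | α ≤ ⟪xi - xj, y⟫ - b ∧ ⟪xi - xj, y⟫ - b ≤ β} ∩ Y) :=
        withDensity_ofReal_apply_le_mul_inter _ hY.measurableSet hρM hsupp _
    _ ≤ _ := by
        gcongr
        refine (volume_le_mul_hausdorffMeasure_image_hyperplaneProj b finrank_euclideanSpace_fin hv
          Set.inter_subset_left).trans ?_
        gcongr
        exact image_hyperplaneProj_slab_inter_subset b hv α β Y

/-- the R-measure of a slab of width β - α around the hyperplane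
H = {y : ⟪x_i - x_j, y⟫ = b} is at most (β-α)/‖x_i-x_j‖ · M · H^{d-1}(H ∩ Y'),
where Y' is the ((|α| ⊔ |β|)/‖x_i-x_j‖)-neighborhood of the compact support Y of the
bounded density ρ of R. -/
theorem slab_measure_le (d : ℕ) (ρ : EuclideanSpace ℝ (Fin d) → ℝ) (M : ℝ) (hM : 0 < M)
    (hρM : ∀ y, ρ y ≤ M) (hρ0 : ∀ y, 0 ≤ ρ y)
    (Y : Set (EuclideanSpace ℝ (Fin d))) (hY : IsCompact Y)
    (hsupp : ∀ y ∉ Y, ρ y = 0)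
    (R : Measure (EuclideanSpace ℝ (Fin d)))
    (hR : R = volume.withDensity (fun y => ENNReal.ofReal (ρ y)))
    (xi xj : EuclideanSpace ℝ (Fin d)) (hij : xi ≠ xj) (b α β : ℝ) (hαβ : α ≤ β) :
    R {y | α ≤ ⟪xi - xj, y⟫ - b ∧ ⟪xi - xj, y⟫ - b ≤ β}
      ≤ ENNReal.ofReal ((β - α) / ‖xi - xj‖ * M) *
        μH[(d : ℝ) - 1] ({y | ⟪xi - xj, y⟫ = b} ∩
          {y | Metric.infDist y Y ≤ (|α| ⊔ |β|) / ‖xi - xj‖}) :=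
  slab_measure_le_general d ρ M hρM Y hY hsupp R hR xi xj hij b α β hαβ
end
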